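/- arXiv:2307.00987 — 3 statements merged into one kernel-verified Lean document; each statement's English description precedes it below -/
import Mathlib

section
/- Let c₂, c₃, F₀ > 0 with F₀ > 4c₂/c₃, and let F : [0,T) → ℝ be differentiable with F(0) = F₀ and F'(t) ≥ (c₃/(2(1 + c₂ t)³)) F(t)² for all t ∈ [0,T). Then T < ∞. -/
/-- Riccati blow-up: no globally defined differentiable `F` on `[0,∞)` can satisfy
`F(0) = F₀ > 4c₂/c₃` and `F'(t) ≥ c₃/(2(1+c₂t)³) F(t)²` for all `t ≥ 0`. -/
theorem riccati_blowup (c₂ c₃ F₀ : ℝ) (hc₂ : 0 < c₂) (hc₃ : 0 < c₃) (hF₀ : 0 < F₀)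
    (hlarge : F₀ > 4 * c₂ / c₃)
    (F F' : ℝ → ℝ)
    (hderiv : ∀ t : ℝ, 0 ≤ t → HasDerivAt F (F' t) t)
    (hF0 : F 0 = F₀)
    (hineq : ∀ t : ℝ, 0 ≤ t → F' t ≥ c₃ / (2 * (1 + c₂ * t) ^ 3) * (F t) ^ 2) :
    False := by
  have hp : ∀ t : ℝ, 0 ≤ t → (0:ℝ) < 1 + c₂ * t := by
    intro t ht; nlinarith
  -- F' is nonnegative on [0,∞)
  have hF'nn : ∀ t : ℝ, 0 ≤ t → 0 ≤ F' t := by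
    intro t ht
    have h1 := hineq t ht
    have h2 := hp t ht
    have : 0 ≤ c₃ / (2 * (1 + c₂ * t) ^ 3) * (F t) ^ 2 := by positivity
    linarith
  -- F monotone on [0,∞)
  have hmono : MonotoneOn F (Set.Ici (0:ℝ)) := by
    apply monotoneOn_of_deriv_nonneg (convex_Ici 0)
    · intro t ht
      exact ((hderiv t ht).continuousAt).continuousWithinAt
    · intro t ht
      rw [interior_Ici] at ht
      exact ((hderiv t (le_of_lt ht)).differentiableAt).differentiableWithinAt
    · intro t ht
      rw [interior_Ici] at ht
      rw [(hderiv t (le_of_lt ht)).deriv]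
      exact hF'nn t (le_of_lt ht)
  have hFpos : ∀ t : ℝ, 0 ≤ t → 0 < F t := by
    intro t ht
    have := hmono (Set.self_mem_Ici) ht ht
    rw [hF0] at this
    linarith
  -- auxiliary function G
  set A : ℝ := c₃ / (4 * c₂) with hA
  have hApos : 0 < A := by positivity
  set G : ℝ → ℝ := fun t => (F t)⁻¹ - A * (((1 + c₂ * t) ^ 2)⁻¹) with hGdef
  have hGderiv : ∀ t : ℝ, 0 ≤ t →
      HasDerivAt G (-(F' t) / (F t) ^ 2
        - A * (-((2:ℕ) * (1 + c₂ * t) ^ (2-1) * (c₂ * 1)) / ((1 + c₂ * t) ^ 2) ^ 2)) t := by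
    intro t ht
    have h1 : HasDerivAt (fun s : ℝ => 1 + c₂ * s) (c₂ * 1) t :=
      ((hasDerivAt_id t).const_mul c₂).const_add 1
    have h2 := (h1.pow 2).inv (by positivity : ((1 + c₂ * t) ^ 2 : ℝ) ≠ 0)
    have h3 := (hderiv t ht).inv (ne_of_gt (hFpos t ht))
    exact h3.sub (h2.const_mul A)
  -- G antitone on [0,∞)
  have hanti : AntitoneOn G (Set.Ici (0:ℝ)) := by
    apply antitoneOn_of_deriv_nonpos (convex_Ici 0)
    · intro t ht
      exact ((hGderiv t ht).continuousAt).continuousWithinAt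
    · intro t ht
      rw [interior_Ici] at ht
      exact ((hGderiv t (le_of_lt ht)).differentiableAt).differentiableWithinAt
    · intro t ht
      rw [interior_Ici] at ht
      have ht' := le_of_lt (Set.mem_Ioi.mp ht)
      rw [(hGderiv t ht').deriv]
      have hpt := hp t ht'
      have hFt := hFpos t ht'
      have hin := hineq t ht'
      have key : c₃ / (2 * (1 + c₂ * t) ^ 3) * (F t) ^ 2 / (F t) ^ 2
          ≤ F' t / (F t) ^ 2 := by
        apply div_le_div_of_nonneg_right hin (by positivity) |>.trans_eq rfl
      have hq : (0:ℝ) < (F t) ^ 2 := by positivity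
      have e2 : c₃ / (2 * (1 + c₂ * t) ^ 3) * F t ^ 2 / F t ^ 2
          = c₃ / (2 * (1 + c₂ * t) ^ 3) := by
        field_simp
      rw [e2] at key
      have e3 : -(F' t) / (F t) ^ 2
          - A * (-((2:ℕ) * (1 + c₂ * t) ^ (2-1) * (c₂ * 1)) / ((1 + c₂ * t) ^ 2) ^ 2)
          = -(F' t / F t ^ 2) + A * (2 * c₂ / (1 + c₂ * t) ^ 3) := by
        push_cast
        field_simp
        ring
      rw [e3]
      have e4 : A * (2 * c₂ / (1 + c₂ * t) ^ 3) = c₃ / (2 * (1 + c₂ * t) ^ 3) := by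
        rw [hA]; field_simp; ring
      rw [e4]
      linarith
  -- δ := A - 1/F₀ > 0
  have hδ : 0 < A - F₀⁻¹ := by
    have h1 : F₀⁻¹ < (4 * c₂ / c₃)⁻¹ := by
      apply inv_strictAnti₀ (by positivity) hlarge
    rw [inv_div] at h1
    rw [hA]
    linarith
  set δ : ℝ := A - F₀⁻¹ with hδdef
  set t₀ : ℝ := A / δ / c₂ with ht₀def
  have ht₀ : 0 ≤ t₀ := by positivity
  have hle := hanti (Set.self_mem_Ici) ht₀ ht₀
  have hG0 : G 0 = F₀⁻¹ - A := by
    simp [hGdef, hF0]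
  have h1t : 1 + c₂ * t₀ = 1 + A / δ := by
    rw [ht₀def]; field_simp
  have hsmall : A * ((1 + c₂ * t₀) ^ 2)⁻¹ < δ := by
    rw [h1t]
    rw [mul_inv_lt_iff₀ (by positivity)]
    have hx : 0 < A / δ := by positivity
    have : A / δ < (1 + A / δ) ^ 2 := by nlinarith
    calc A = δ * (A / δ) := by field_simp
    _ < δ * (1 + A / δ) ^ 2 := mul_lt_mul_of_pos_left this hδ
  have hGt : G t₀ = (F t₀)⁻¹ - A * ((1 + c₂ * t₀) ^ 2)⁻¹ := rfl
  have hFt₀ : 0 < (F t₀)⁻¹ := by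
    have := hFpos t₀ ht₀
    positivity
  rw [hG0, hGt] at hle
  linarith
end

section
/- Let c₂, c₃ > 0 and let F : [0,T) → ℝ be a differentiable function with F(0) = F₀ > 4c₂/c₃ and F'(t) ≥ (c₃/(2(1 + c₂ t)³)) F(t)² on [0,T). Then F(t) > 0 on [0,T) and for all t ∈ [0,T): F(t) ≥ 4c₂(1 + c₂ t)²/c₃. -/
/-- Quadratic-in-time lower bound (4.12): if `F(0) = F₀ > 4c₂/c₃` and
`F'(t) ≥ c₃/(2(1+c₂t)³) F(t)²` on `[0,T)` (with `T ∈ (0,∞]`), then `F(t) > 0` and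
`F(t) ≥ 4c₂(1+c₂t)²/c₃` on `[0,T)`. -/
theorem riccati_lower_bound (c₂ c₃ F₀ : ℝ) (hc₂ : 0 < c₂) (hc₃ : 0 < c₃)
    (T : EReal) (hT : 0 < T)
    (F F' : ℝ → ℝ)
    (hderiv : ∀ t : ℝ, 0 ≤ t → (t : EReal) < T → HasDerivAt F (F' t) t)
    (hF0 : F 0 = F₀) (hlarge : F₀ > 4 * c₂ / c₃)
    (hineq : ∀ t : ℝ, 0 ≤ t → (t : EReal) < T →
      F' t ≥ c₃ / (2 * (1 + c₂ * t) ^ 3) * (F t) ^ 2) :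
    ∀ t : ℝ, 0 ≤ t → (t : EReal) < T →
      0 < F t ∧ F t ≥ 4 * c₂ * (1 + c₂ * t) ^ 2 / c₃ := by
  intro t ht htT
  have hF₀pos : 0 < F₀ := lt_trans (by positivity) hlarge
  -- every point of [0, t] is in the domain
  have hdom : ∀ s ∈ Set.Icc (0:ℝ) t, 0 ≤ s ∧ (s : EReal) < T := by
    intro s hs
    exact ⟨hs.1, lt_of_le_of_lt (EReal.coe_le_coe_iff.mpr hs.2) htT⟩
  have hconv : Convex ℝ (Set.Icc (0:ℝ) t) := convex_Icc 0 t
  have hint : interior (Set.Icc (0:ℝ) t) ⊆ Set.Icc (0:ℝ) t := interior_subset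
  have hcontF : ContinuousOn F (Set.Icc (0:ℝ) t) := fun s hs =>
    ((hderiv s (hdom s hs).1 (hdom s hs).2).continuousAt).continuousWithinAt
  -- F is monotone on [0, t]
  have hmono : MonotoneOn F (Set.Icc (0:ℝ) t) := by
    apply monotoneOn_of_hasDerivWithinAt_nonneg hconv hcontF
      (f' := F') (fun s hs => ((hderiv s (hdom s (hint hs)).1
        (hdom s (hint hs)).2).hasDerivWithinAt))
    intro s hs
    obtain ⟨hs0, hsT⟩ := hdom s (hint hs)
    have h1 : (0:ℝ) < 1 + c₂ * s := by nlinarith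
    have h2 := hineq s hs0 hsT
    have h3 : 0 ≤ c₃ / (2 * (1 + c₂ * s) ^ 3) * (F s) ^ 2 :=
      mul_nonneg (le_of_lt (div_pos hc₃ (by positivity))) (sq_nonneg _)
    linarith
  have hFpos : ∀ s ∈ Set.Icc (0:ℝ) t, 0 < F s := by
    intro s hs
    have h0 : (0:ℝ) ∈ Set.Icc (0:ℝ) t := ⟨le_refl 0, ht⟩
    have := hmono h0 hs hs.1
    rw [hF0] at this
    linarith
  have hFt : 0 < F t := hFpos t ⟨ht, le_refl t⟩
  refine ⟨hFt, ?_⟩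
  -- auxiliary function g = 1/F - (c₃/(4c₂)) (1+c₂ s)⁻²
  set g : ℝ → ℝ := fun s => (F s)⁻¹ - c₃ / (4 * c₂) * ((1 + c₂ * s) ^ 2)⁻¹ with hg
  have hganti : AntitoneOn g (Set.Icc (0:ℝ) t) := by
    apply antitoneOn_of_hasDerivWithinAt_nonpos hconv
      (f' := fun s => -F' s / (F s) ^ 2 -
        c₃ / (4 * c₂) * (-(2 * (1 + c₂ * s) ^ 1 * c₂) / ((1 + c₂ * s) ^ 2) ^ 2))
    · intro s hs
      have h1 : (0:ℝ) < 1 + c₂ * s := by nlinarith [hs.1]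
      have hFs := hFpos s hs
      have hd1 : HasDerivAt (fun s => (F s)⁻¹) (-F' s / (F s) ^ 2) s :=
        (hderiv s (hdom s hs).1 (hdom s hs).2).inv (ne_of_gt hFs)
      have hd2 : HasDerivAt (fun s : ℝ => ((1 + c₂ * s) ^ 2)⁻¹)
          (-(2 * (1 + c₂ * s) ^ 1 * c₂) / ((1 + c₂ * s) ^ 2) ^ 2) s := by
        have hlin : HasDerivAt (fun s : ℝ => 1 + c₂ * s) c₂ s := by
          simpa using ((hasDerivAt_id s).const_mul c₂).const_add 1
        exact (hlin.pow 2).inv (pow_pos h1 2).ne'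
      exact ((hd1.sub ((hd2.const_mul (c₃ / (4 * c₂)))))).continuousAt.continuousWithinAt
    · intro s hs
      obtain ⟨hs0, hsT⟩ := hdom s (hint hs)
      have h1 : (0:ℝ) < 1 + c₂ * s := by nlinarith
      have hFs := hFpos s (hint hs)
      have hd1 : HasDerivAt (fun s => (F s)⁻¹) (-F' s / (F s) ^ 2) s :=
        (hderiv s hs0 hsT).inv (ne_of_gt hFs)
      have hd2 : HasDerivAt (fun s : ℝ => ((1 + c₂ * s) ^ 2)⁻¹)
          (-(2 * (1 + c₂ * s) ^ 1 * c₂) / ((1 + c₂ * s) ^ 2) ^ 2) s := by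
        have hlin : HasDerivAt (fun s : ℝ => 1 + c₂ * s) c₂ s := by
          simpa using ((hasDerivAt_id s).const_mul c₂).const_add 1
        exact (hlin.pow 2).inv (pow_pos h1 2).ne'
      exact (hd1.sub (hd2.const_mul (c₃ / (4 * c₂)))).hasDerivWithinAt
    · intro s hs
      obtain ⟨hs0, hsT⟩ := hdom s (hint hs)
      have h1 : (0:ℝ) < 1 + c₂ * s := by nlinarith
      have hFs := hFpos s (hint hs)
      have hiq := hineq s hs0 hsT
      -- need: -F'/F² - (c₃/(4c₂)) * (-(2(1+c₂s)c₂)/((1+c₂s)²)²) ≤ 0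
      have key : c₃ / (2 * (1 + c₂ * s) ^ 3) ≤ F' s / (F s) ^ 2 := by
        rw [div_le_div_iff₀ (by positivity) (by positivity)]
        calc c₃ * F s ^ 2 = c₃ / (2 * (1 + c₂ * s) ^ 3) * F s ^ 2 * (2 * (1 + c₂ * s) ^ 3) := by
              field_simp
          _ ≤ F' s * (2 * (1 + c₂ * s) ^ 3) := by
              apply mul_le_mul_of_nonneg_right hiq (by positivity)
      have hsimp : c₃ / (4 * c₂) * ((2 * (1 + c₂ * s) ^ 1 * c₂) / ((1 + c₂ * s) ^ 2) ^ 2)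
          = c₃ / (2 * (1 + c₂ * s) ^ 3) := by
        field_simp
        ring
      have : -F' s / (F s) ^ 2 + c₃ / (2 * (1 + c₂ * s) ^ 3) ≤ 0 := by
        have : -(F' s / (F s) ^ 2) ≤ -(c₃ / (2 * (1 + c₂ * s) ^ 3)) := neg_le_neg key
        rw [neg_div]
        linarith
      calc -F' s / (F s) ^ 2 - c₃ / (4 * c₂) * (-(2 * (1 + c₂ * s) ^ 1 * c₂) / ((1 + c₂ * s) ^ 2) ^ 2)
          = -F' s / (F s) ^ 2 + c₃ / (4 * c₂) * ((2 * (1 + c₂ * s) ^ 1 * c₂) / ((1 + c₂ * s) ^ 2) ^ 2) := by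
            ring
        _ = -F' s / (F s) ^ 2 + c₃ / (2 * (1 + c₂ * s) ^ 3) := by rw [hsimp]
        _ ≤ 0 := this
  have hgle : g t ≤ g 0 :=
    hganti ⟨le_refl 0, ht⟩ ⟨ht, le_refl t⟩ ht
  -- unfold g values
  have h1t : (0:ℝ) < 1 + c₂ * t := by nlinarith
  have hg0 : g 0 = F₀⁻¹ - c₃ / (4 * c₂) := by
    simp [hg, hF0]
  have hkey : (F t)⁻¹ < c₃ / (4 * c₂) * ((1 + c₂ * t) ^ 2)⁻¹ := by
    have hF₀inv : F₀⁻¹ < c₃ / (4 * c₂) := by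
      have hr : c₃ / (4 * c₂) = (4 * c₂ / c₃)⁻¹ := by rw [inv_div]
      rw [hr]
      exact (inv_lt_inv₀ hF₀pos (by positivity)).mpr hlarge
    have := hgle
    rw [hg0] at this
    simp only [hg] at this
    nlinarith [mul_pos (div_pos hc₃ (by positivity : (0:ℝ) < 4 * c₂)) (inv_pos.mpr (pow_pos h1t 2))]
  -- convert 1/F t < c₃/(4c₂(1+c₂t)²) to the claimed bound
  have h2 : 4 * c₂ * (1 + c₂ * t) ^ 2 / c₃ < F t := by
    have hr : c₃ / (4 * c₂) * ((1 + c₂ * t) ^ 2)⁻¹ = (4 * c₂ * (1 + c₂ * t) ^ 2 / c₃)⁻¹ := by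
      field_simp
    rw [hr] at hkey
    have hpos : (0:ℝ) < 4 * c₂ * (1 + c₂ * t) ^ 2 / c₃ := by positivity
    exact (inv_lt_inv₀ hFt hpos).mp hkey
  linarith
end

section
/- Let a, b, K ≥ 0 and c₂, c₃ > 0, and suppose F : [0,T) → ℝ is differentiable with F(0) > 4c₂/c₃, F'(t) ≥ (c₃/(1+c₂t)³)F(t)² − K for all t ∈ [0,T), and 4K ≤ 16c₂²/c₃. If in addition 2K ≤ (c₃/(1+c₂t)³)F(t)² holds at t = 0 (which follows from 4K ≤ c₃F(0)²), then 2K ≤ (c₃/(1+c₂t)³)F(t)² for all t ∈ [0,T), and consequently F'(t) ≥ (c₃/(2(1+c₂t)³))F(t)² on [0,T). -/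
/-- Bootstrap closing of the a priori assumption (AP1): under
`F'(t) ≥ c₃/(1+c₂t)³ F(t)² − K`, `F(0) > 4c₂/c₃`, `4K ≤ 16c₂²/c₃` and the initial bound
`2K ≤ c₃ F(0)²`, the a priori estimate `2K ≤ c₃/(1+c₂t)³ F(t)²` propagates on `[0,T)`,
whence `F'(t) ≥ c₃/(2(1+c₂t)³) F(t)²` there. -/
theorem bootstrap_closing (K c₂ c₃ : ℝ) (hK : 0 ≤ K) (hc₂ : 0 < c₂) (hc₃ : 0 < c₃)
    (T : EReal) (hT : 0 < T)
    (F F' : ℝ → ℝ)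
    (hderiv : ∀ t : ℝ, 0 ≤ t → (t : EReal) < T → HasDerivAt F (F' t) t)
    (hlarge : F 0 > 4 * c₂ / c₃)
    (hineq : ∀ t : ℝ, 0 ≤ t → (t : EReal) < T →
      F' t ≥ c₃ / (1 + c₂ * t) ^ 3 * (F t) ^ 2 - K)
    (hKsmall : 4 * K ≤ 16 * c₂ ^ 2 / c₃)
    (hK0 : 2 * K ≤ c₃ * (F 0) ^ 2) :
    ∀ t : ℝ, 0 ≤ t → (t : EReal) < T →
      2 * K ≤ c₃ / (1 + c₂ * t) ^ 3 * (F t) ^ 2 ∧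
      F' t ≥ c₃ / (2 * (1 + c₂ * t) ^ 3) * (F t) ^ 2 := by
  set g : ℝ → ℝ := fun t => 4 * c₂ / c₃ * (1 + c₂ * t) ^ 2 with hgdef
  have hKle : K ≤ 4 * c₂ ^ 2 / c₃ := by
    have h : 16 * c₂ ^ 2 / c₃ = 4 * (4 * c₂ ^ 2 / c₃) := by ring
    linarith
  -- derivative of g
  have hgd : ∀ u : ℝ, HasDerivAt g (8 * c₂ ^ 2 * (1 + c₂ * u) / c₃) u := by
    intro u
    have h1 : HasDerivAt (fun x : ℝ => 1 + c₂ * x) c₂ u := by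
      simpa using ((hasDerivAt_id u).const_mul c₂).const_add 1
    have h2 : HasDerivAt (fun y : ℝ => 4 * c₂ / c₃ * (1 + c₂ * y) ^ 2)
        (4 * c₂ / c₃ * ((2 : ℕ) * (1 + c₂ * u) ^ (2 - 1) * c₂)) u := (h1.fun_pow 2).const_mul (4 * c₂ / c₃)
    convert h2 using 1
    ring
  -- key comparison claim
  have key : ∀ t : ℝ, 0 ≤ t → (t : EReal) < T → g t < F t := by
    intro t₀ ht₀ ht₀T
    by_contra hcon
    push_neg at hcon
    have hmem : ∀ u ∈ Set.Icc (0:ℝ) t₀, (u : EReal) < T := fun u hu =>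
      lt_of_le_of_lt (EReal.coe_le_coe_iff.2 hu.2) ht₀T
    have hcont : ContinuousOn (fun u => F u - g u) (Set.Icc 0 t₀) := fun u hu =>
      (((hderiv u hu.1 (hmem u hu)).sub (hgd u)).continuousAt).continuousWithinAt
    set S : Set ℝ := Set.Icc 0 t₀ ∩ (fun u => F u - g u) ⁻¹' Set.Iic 0 with hSdef
    have hSclosed : IsClosed S := hcont.preimage_isClosed_of_isClosed isClosed_Icc isClosed_Iic
    have hSne : S.Nonempty := ⟨t₀, ⟨ht₀, le_refl _⟩, by simpa using sub_nonpos.2 hcon⟩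
    have hSbdd : BddBelow S := ⟨0, fun u hu => hu.1.1⟩
    set s := sInf S with hsdef
    have hs : s ∈ S := hSclosed.csInf_mem hSne hSbdd
    have hs0 : 0 ≤ s := hs.1.1
    have hsle : F s - g s ≤ 0 := hs.2
    have h0 : g 0 < F 0 := by
      simpa [hgdef] using hlarge
    have hsne : s ≠ 0 := by
      intro h
      rw [h] at hsle
      linarith
    have hspos : 0 < s := lt_of_le_of_ne hs0 (Ne.symm hsne)
    have hlt : ∀ u, 0 ≤ u → u < s → g u < F u := by
      intro u hu hus
      by_contra hc
      push_neg at hc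
      have huS : u ∈ S := ⟨⟨hu, le_trans hus.le hs.1.2⟩, by simpa using sub_nonpos.2 hc⟩
      exact absurd (csInf_le hSbdd huS) (not_le.2 hus)
    -- F s = g s by continuity from the left
    have hsT : (s : EReal) < T := hmem s hs.1
    have hFd := hderiv s hs0 hsT
    have hhd : HasDerivAt (fun u => F u - g u) (F' s - 8 * c₂ ^ 2 * (1 + c₂ * s) / c₃) s :=
      hFd.sub (hgd s)
    have hge : 0 ≤ F s - g s := by
      have htend : Filter.Tendsto (fun u => F u - g u) (nhdsWithin s (Set.Iio s))
          (nhds (F s - g s)) := hhd.continuousAt.continuousWithinAt.tendsto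
      refine ge_of_tendsto htend ?_
      filter_upwards [Ioo_mem_nhdsLT_of_mem (Set.mem_Ioc.2 ⟨hspos, le_refl s⟩)] with u hu
      exact (sub_pos.2 (hlt u hu.1.le hu.2)).le
    have hFs : F s = g s := by linarith
    -- the derivative of F - g at s is positive
    have h1s : (1:ℝ) ≤ 1 + c₂ * s := by nlinarith
    have h1spos : (0:ℝ) < 1 + c₂ * s := by linarith
    have hcalc : c₃ / (1 + c₂ * s) ^ 3 * (g s) ^ 2 = 16 * c₂ ^ 2 * (1 + c₂ * s) / c₃ := by
      simp only [hgdef]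
      field_simp
      ring
    have hDpos : 0 < F' s - 8 * c₂ ^ 2 * (1 + c₂ * s) / c₃ := by
      have hi := hineq s hs0 hsT
      rw [hFs, hcalc] at hi
      have h4 : 4 * c₂ ^ 2 / c₃ ≤ 8 * c₂ ^ 2 * (1 + c₂ * s) / c₃ - 4 * c₂ ^ 2 / c₃ := by
        rw [div_le_iff₀ hc₃, sub_mul, div_mul_cancel₀ _ (ne_of_gt hc₃),
          div_mul_cancel₀ _ (ne_of_gt hc₃)]
        nlinarith
      have h16 : 16 * c₂ ^ 2 * (1 + c₂ * s) / c₃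
          = 2 * (8 * c₂ ^ 2 * (1 + c₂ * s) / c₃) := by ring
      have hc : 0 < 4 * c₂ ^ 2 / c₃ := by positivity
      linarith
    -- but the derivative from the left is ≤ 0, contradiction
    have hslope : Filter.Tendsto (slope (fun u => F u - g u) s) (nhdsWithin s (Set.Iio s))
        (nhds (F' s - 8 * c₂ ^ 2 * (1 + c₂ * s) / c₃)) := by
      have := hasDerivAt_iff_tendsto_slope.1 hhd
      exact this.mono_left (nhdsWithin_mono s (fun u hu => ne_of_lt hu))
    have hDle : F' s - 8 * c₂ ^ 2 * (1 + c₂ * s) / c₃ ≤ 0 := by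
      refine le_of_tendsto hslope ?_
      filter_upwards [Ioo_mem_nhdsLT_of_mem (Set.mem_Ioc.2 ⟨hspos, le_refl s⟩)] with u hu
      have hpos : 0 < F u - g u := sub_pos.2 (hlt u hu.1.le hu.2)
      have hsl : slope (fun u => F u - g u) s u
          = ((F u - g u) - (F s - g s)) / (u - s) := by
        rw [slope_def_field]
      rw [hsl, hFs, sub_self, sub_zero]
      exact le_of_lt (div_neg_of_pos_of_neg hpos (by linarith [hu.2]))
    linarith
  -- conclude
  intro t ht htT
  have hgt := key t ht htT
  have h1t : (1:ℝ) ≤ 1 + c₂ * t := by nlinarith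
  have h1tpos : (0:ℝ) < 1 + c₂ * t := by linarith
  have hgpos : 0 < g t := by simp only [hgdef]; positivity
  have hF2 : (g t) ^ 2 ≤ (F t) ^ 2 := by nlinarith
  have hcalc : c₃ / (1 + c₂ * t) ^ 3 * (g t) ^ 2 = 16 * c₂ ^ 2 * (1 + c₂ * t) / c₃ := by
    simp only [hgdef]
    field_simp
    ring
  have hcoef : 0 < c₃ / (1 + c₂ * t) ^ 3 := by positivity
  have hA : 2 * K ≤ c₃ / (1 + c₂ * t) ^ 3 * (F t) ^ 2 := by
    have h1 : c₃ / (1 + c₂ * t) ^ 3 * (g t) ^ 2 ≤ c₃ / (1 + c₂ * t) ^ 3 * (F t) ^ 2 :=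
      mul_le_mul_of_nonneg_left hF2 hcoef.le
    have h2 : 16 * c₂ ^ 2 / c₃ ≤ 16 * c₂ ^ 2 * (1 + c₂ * t) / c₃ :=
      (div_le_div_iff_of_pos_right hc₃).2 (by nlinarith)
    linarith [hcalc]
  refine ⟨hA, ?_⟩
  have hi := hineq t ht htT
  have heq : c₃ / (2 * (1 + c₂ * t) ^ 3) * (F t) ^ 2
      = c₃ / (1 + c₂ * t) ^ 3 * (F t) ^ 2 / 2 := by
    rw [div_mul_eq_mul_div, div_mul_eq_mul_div, div_div]
    ring_nf
  rw [ge_iff_le, heq]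
  linarith
end
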